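/- arXiv:1609.01543 — 2 statements merged into one kernel-verified Lean document; each statement's English description precedes it below -/
import Mathlib

section
/- For every integer m ≥ 1, the formula ‖x‖ = sup_n |(H^(m)x)_n| defines a norm on each of the spaces h_0(Δ^(m)), h_c(Δ^(m)) and h_∞(Δ^(m)) (in particular ‖x‖ = 0 implies x = 0), each of these spaces is complete in this norm, and for each fixed index n the coordinate functional x ↦ x_n is continuous on each of them; that is, they are BK-spaces. -/
open Filter Finset Topology

/- Real sequences are modelled as functions `ℕ → ℝ`, where the Lean index `n : ℕ`
corresponds to the paper's index `n + 1` (the paper indexes sequences by `k ≥ 1`).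
Thus the paper's entry `h_{nk} = ∑_{i=k}^{n} (-1)^{i-k} C(m, i-k) / (n+i-1)`
(for `1 ≤ k ≤ n`) becomes, with 0-based indices,
`hMat m n k = ∑_{i ∈ Icc k n} (-1)^{i-k} C(m, i-k) / (n+i+1)`. -/

/-- The entries of the triangle matrix `H^(m) = H Δ^(m)` (0-based indexing). -/
noncomputable def hMat (m n k : ℕ) : ℝ :=
  ∑ i ∈ Finset.Icc k n, (-1 : ℝ) ^ (i - k) * (Nat.choose m (i - k) : ℝ) / ((n + i + 1 : ℕ) : ℝ)

/-- The `H^(m)`-transform of a sequence: `(H^(m) x)_n = ∑_{k=1}^{n} h_{nk} x_k`. -/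
noncomputable def hTrans (m : ℕ) (x : ℕ → ℝ) (n : ℕ) : ℝ :=
  ∑ k ∈ Finset.range (n + 1), hMat m n k * x k

/-- `h_0(Δ^(m))`: sequences whose `H^(m)`-transform tends to `0`. -/
def hZero (m : ℕ) : Set (ℕ → ℝ) := {x | Tendsto (hTrans m x) atTop (𝓝 0)}

/-- `h_c(Δ^(m))`: sequences whose `H^(m)`-transform converges. -/
def hConv (m : ℕ) : Set (ℕ → ℝ) := {x | ∃ L : ℝ, Tendsto (hTrans m x) atTop (𝓝 L)}

/-- `h_∞(Δ^(m))`: sequences whose `H^(m)`-transform is bounded. -/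
def hBdd (m : ℕ) : Set (ℕ → ℝ) := {x | ∃ M : ℝ, ∀ n, |hTrans m x n| ≤ M}

/-- The space `c₀` of null real sequences. -/
def c0Seq : Set (ℕ → ℝ) := {y | Tendsto y atTop (𝓝 0)}

/-- The space `c` of convergent real sequences. -/
def cSeq : Set (ℕ → ℝ) := {y | ∃ L : ℝ, Tendsto y atTop (𝓝 L)}

/-- The space `ℓ∞` of bounded real sequences. -/
def linfSeq : Set (ℕ → ℝ) := {y | ∃ M : ℝ, ∀ n, |y n| ≤ M}

/-- The sup norm `‖y‖ = sup_n |y_n|` of a sequence. -/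
noncomputable def supNorm (y : ℕ → ℝ) : ℝ := ⨆ n, |y n|

/-- The norm `‖x‖ = sup_n |(H^(m) x)_n|` on the Hilbert difference sequence spaces. -/
noncomputable def hNorm (m : ℕ) (x : ℕ → ℝ) : ℝ := supNorm (hTrans m x)

/-- `S` is a BK-space with norm `N`: `N` is a norm on `S` (in particular `N x = 0 → x = 0`),
`S` is complete in the induced metric, and each coordinate functional `x ↦ x n` is
continuous on `S` (equivalently, bounded for the norm). -/
def IsBKSpace (S : Set (ℕ → ℝ)) (N : (ℕ → ℝ) → ℝ) : Prop :=
  (∀ x ∈ S, 0 ≤ N x) ∧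
  (∀ x ∈ S, N x = 0 → x = 0) ∧
  (∀ x ∈ S, ∀ a : ℝ, N (a • x) = |a| * N x) ∧
  (∀ x ∈ S, ∀ y ∈ S, N (x + y) ≤ N x + N y) ∧
  (∀ u : ℕ → (ℕ → ℝ), (∀ i, u i ∈ S) →
    (∀ ε : ℝ, 0 < ε → ∃ I : ℕ, ∀ p ≥ I, ∀ q ≥ I, N (u p - u q) < ε) →
    ∃ x ∈ S, Tendsto (fun i => N (u i - x)) atTop (𝓝 0)) ∧
  (∀ n : ℕ, ∃ C : ℝ, ∀ x ∈ S, |x n| ≤ C * N x)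

/-! The diagonal entries `h_{nn} = 1/(2n-1)` of `H^(m)` do not vanish, so `x ↦ H^(m) x` is a
linear bijection of `ℝ^ℕ` carrying `h_0(Δ^(m))`, `h_c(Δ^(m))`, `h_∞(Δ^(m))` onto `c₀`, `c`, `ℓ∞`,
and by definition it is an isometry onto them for the sup norm. These three spaces are closed
under uniform limits, hence complete, and completeness transfers back along the bijection.
Solving the triangular system row by row bounds `|x_n|` by a constant multiple of
`max_{k ≤ n} |(H^(m) x)_k| ≤ ‖x‖`, which gives continuity of the coordinates and
`‖x‖ = 0 → x = 0`. -/

lemma supNorm_nonneg (y : ℕ → ℝ) : 0 ≤ supNorm y :=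
  Real.iSup_nonneg fun _ => abs_nonneg _

lemma supNorm_le {y : ℕ → ℝ} {M : ℝ} (h : ∀ n, |y n| ≤ M) : supNorm y ≤ M :=
  ciSup_le h

lemma abs_le_supNorm {y : ℕ → ℝ} (hy : y ∈ linfSeq) (n : ℕ) : |y n| ≤ supNorm y := by
  obtain ⟨M, hM⟩ := hy
  exact le_ciSup ⟨M, by rintro _ ⟨k, rfl⟩; exact hM k⟩ n

lemma supNorm_smul (a : ℝ) (y : ℕ → ℝ) : supNorm (a • y) = |a| * supNorm y := by
  simp only [supNorm, Pi.smul_apply, smul_eq_mul, abs_mul, Real.mul_iSup_of_nonneg (abs_nonneg a)]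

lemma supNorm_add_le {y z : ℕ → ℝ} (hy : y ∈ linfSeq) (hz : z ∈ linfSeq) :
    supNorm (y + z) ≤ supNorm y + supNorm z :=
  supNorm_le fun n =>
    (abs_add_le _ _).trans (add_le_add (abs_le_supNorm hy n) (abs_le_supNorm hz n))

lemma sub_mem_linfSeq {y z : ℕ → ℝ} (hy : y ∈ linfSeq) (hz : z ∈ linfSeq) : y - z ∈ linfSeq := by
  obtain ⟨M, hM⟩ := hy
  obtain ⟨M', hM'⟩ := hz
  exact ⟨M + M', fun n => (abs_sub _ _).trans (add_le_add (hM n) (hM' n))⟩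

lemma cSeq_subset_linfSeq : cSeq ⊆ linfSeq := by
  rintro y ⟨L, hL⟩
  obtain ⟨M, hM⟩ := hL.abs.bddAbove_range
  exact ⟨M, fun n => hM ⟨n, rfl⟩⟩

lemma c0Seq_subset_linfSeq : c0Seq ⊆ linfSeq :=
  fun _ hy => cSeq_subset_linfSeq ⟨0, hy⟩

lemma tendsto_supNorm_sub_of_tendstoUniformly {y : ℕ → ℕ → ℝ} {Y : ℕ → ℝ}
    (h : TendstoUniformly y Y atTop) : Tendsto (fun i => supNorm (y i - Y)) atTop (𝓝 0) := by
  rw [Metric.tendsto_nhds]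
  intro ε hε
  filter_upwards [Metric.tendstoUniformly_iff.mp h (ε / 2) (half_pos hε)] with i hi
  have : supNorm (y i - Y) ≤ ε / 2 :=
    supNorm_le fun n => by simpa only [Pi.sub_apply, dist_comm, Real.dist_eq] using (hi n).le
  rw [Real.dist_eq, sub_zero, abs_of_nonneg (supNorm_nonneg _)]
  linarith

def IsUniformLimitClosed (T : Set (ℕ → ℝ)) : Prop :=
  ∀ ⦃v : ℕ → ℕ → ℝ⦄ ⦃Y : ℕ → ℝ⦄, (∀ i, v i ∈ T) → TendstoUniformly v Y atTop → Y ∈ T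

lemma isUniformLimitClosed_linfSeq : IsUniformLimitClosed linfSeq := by
  intro v Y hv hY
  obtain ⟨i, hi⟩ := (Metric.tendstoUniformly_iff.mp hY 1 one_pos).exists
  obtain ⟨M, hM⟩ := hv i
  refine ⟨M + 1, fun n => ?_⟩
  have h := hi n
  rw [Real.dist_eq] at h
  calc |Y n| ≤ |v i n| + |Y n - v i n| := by simpa using abs_add_le (v i n) (Y n - v i n)
    _ ≤ M + 1 := add_le_add (hM n) h.le

lemma isUniformLimitClosed_c0Seq : IsUniformLimitClosed c0Seq :=
  fun _ _ hv hY => hY.tendsto_of_eventually_tendsto (Eventually.of_forall hv) tendsto_const_nhds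

lemma isUniformLimitClosed_cSeq : IsUniformLimitClosed cSeq := by
  intro v Y hv hY
  suffices CauchySeq Y from cauchySeq_tendsto_of_complete this
  rw [Metric.cauchySeq_iff]
  intro ε hε
  obtain ⟨i, hi⟩ := (Metric.tendstoUniformly_iff.mp hY (ε / 3) (by positivity)).exists
  obtain ⟨L, hL⟩ := hv i
  obtain ⟨N, hN⟩ := Metric.cauchySeq_iff.mp hL.cauchySeq (ε / 3) (by positivity)
  refine ⟨N, fun p hp q hq => ?_⟩
  calc dist (Y p) (Y q) ≤ dist (Y p) (v i p) + dist (v i p) (v i q) + dist (v i q) (Y q) :=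
        dist_triangle4 _ _ _ _
    _ < ε / 3 + ε / 3 + ε / 3 := by
        gcongr
        · exact hi p
        · exact hN p hp q hq
        · rw [dist_comm]; exact hi q
    _ = ε := by ring

lemma exists_tendsto_supNorm_of_cauchy {T : Set (ℕ → ℝ)} (hT : T ⊆ linfSeq)
    (hcl : IsUniformLimitClosed T) {y : ℕ → ℕ → ℝ} (hy : ∀ i, y i ∈ T)
    (hc : ∀ ε : ℝ, 0 < ε → ∃ I : ℕ, ∀ p ≥ I, ∀ q ≥ I, supNorm (y p - y q) < ε) :
    ∃ Y ∈ T, Tendsto (fun i => supNorm (y i - Y)) atTop (𝓝 0) := by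
  have hUC : UniformCauchySeqOn y atTop Set.univ := by
    refine Metric.uniformCauchySeqOn_iff.mpr fun ε hε => ?_
    obtain ⟨I, hI⟩ := hc ε hε
    refine ⟨I, fun p hp q hq n _ => ?_⟩
    rw [Real.dist_eq]
    exact (abs_le_supNorm (sub_mem_linfSeq (hT (hy p)) (hT (hy q))) n).trans_lt (hI p hp q hq)
  choose Y hY using fun n => cauchySeq_tendsto_of_complete (hUC.cauchySeq (Set.mem_univ n))
  have hunif : TendstoUniformly y Y atTop :=
    tendstoUniformlyOn_univ.mp (hUC.tendstoUniformlyOn_of_tendsto fun n _ => hY n)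
  exact ⟨Y, hcl hy hunif, tendsto_supNorm_sub_of_tendstoUniformly hunif⟩

/-- `hTrans m` is `triangleMap (hMat m)` definitionally. -/
def triangleMap (a : ℕ → ℕ → ℝ) : (ℕ → ℝ) →ₗ[ℝ] (ℕ → ℝ) where
  toFun x n := ∑ k ∈ range (n + 1), a n k * x k
  map_add' x y := by
    funext n
    simp only [Pi.add_apply, mul_add, sum_add_distrib]
  map_smul' c x := by
    funext n
    simp only [Pi.smul_apply, smul_eq_mul, RingHom.id_apply, mul_sum]
    exact sum_congr rfl fun _ _ => by ring

section TriangleMap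

variable {a : ℕ → ℕ → ℝ}

lemma triangleMap_apply (a : ℕ → ℕ → ℝ) (x : ℕ → ℝ) (n : ℕ) :
    triangleMap a x n = a n n * x n + ∑ k ∈ range n, a n k * x k := by
  rw [triangleMap, LinearMap.coe_mk, AddHom.coe_mk, sum_range_succ, add_comm]

noncomputable def triangleSolve (a : ℕ → ℕ → ℝ) (y : ℕ → ℝ) : ℕ → ℝ
  | n => (y n - ∑ k : Fin n, a n k * triangleSolve a y k) / a n n

lemma triangleSolve_eq (a : ℕ → ℕ → ℝ) (y : ℕ → ℝ) (n : ℕ) :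
    triangleSolve a y n = (y n - ∑ k ∈ range n, a n k * triangleSolve a y k) / a n n := by
  rw [triangleSolve, Fin.sum_univ_eq_sum_range (fun k => a n k * triangleSolve a y k)]

lemma triangleMap_triangleSolve (ha : ∀ n, a n n ≠ 0) (y : ℕ → ℝ) :
    triangleMap a (triangleSolve a y) = y := by
  funext n
  rw [triangleMap_apply, triangleSolve_eq a y n, mul_div_cancel₀ _ (ha n)]
  ring

lemma triangleMap_surjective (ha : ∀ n, a n n ≠ 0) : Function.Surjective (triangleMap a) :=
  fun y => ⟨triangleSolve a y, triangleMap_triangleSolve ha y⟩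

lemma abs_le_mul_supNorm_triangleMap_of_forall_lt {x : ℕ → ℝ} (hx : triangleMap a x ∈ linfSeq)
    {n : ℕ} (ha : a n n ≠ 0) {C : ℝ} (hC : ∀ k < n, |x k| ≤ C * supNorm (triangleMap a x)) :
    |x n| ≤ (1 + C * ∑ k ∈ range n, |a n k|) / |a n n| * supNorm (triangleMap a x) := by
  set S := supNorm (triangleMap a x)
  have hdiag : a n n * x n = triangleMap a x n - ∑ k ∈ range n, a n k * x k := by
    rw [triangleMap_apply]; ring
  have hsum : |∑ k ∈ range n, a n k * x k| ≤ C * (∑ k ∈ range n, |a n k|) * S := by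
    calc |∑ k ∈ range n, a n k * x k| ≤ ∑ k ∈ range n, |a n k| * (C * S) :=
          (abs_sum_le_sum_abs _ _).trans <| sum_le_sum fun k hk => by
            rw [abs_mul]; exact mul_le_mul_of_nonneg_left (hC k (mem_range.mp hk)) (abs_nonneg _)
      _ = C * (∑ k ∈ range n, |a n k|) * S := by rw [← sum_mul]; ring
  rw [div_mul_eq_mul_div, le_div_iff₀ (abs_pos.mpr ha), mul_comm, ← abs_mul, hdiag]
  calc |triangleMap a x n - ∑ k ∈ range n, a n k * x k|
      ≤ |triangleMap a x n| + |∑ k ∈ range n, a n k * x k| := abs_sub _ _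
    _ ≤ S + C * (∑ k ∈ range n, |a n k|) * S := add_le_add (abs_le_supNorm hx n) hsum
    _ = (1 + C * ∑ k ∈ range n, |a n k|) * S := by ring

lemma exists_abs_le_mul_supNorm_triangleMap (ha : ∀ n, a n n ≠ 0) (n : ℕ) :
    ∃ C : ℝ, ∀ x, triangleMap a x ∈ linfSeq → |x n| ≤ C * supNorm (triangleMap a x) := by
  suffices ∀ n, ∃ C : ℝ, ∀ x, triangleMap a x ∈ linfSeq →
      ∀ k < n, |x k| ≤ C * supNorm (triangleMap a x) by
    obtain ⟨C, hC⟩ := this (n + 1)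
    exact ⟨C, fun x hx => hC x hx n n.lt_succ_self⟩
  intro n
  induction n with
  | zero => exact ⟨0, fun _ _ k hk => absurd hk k.not_lt_zero⟩
  | succ n ih =>
    obtain ⟨C, hC⟩ := ih
    refine ⟨max C ((1 + C * ∑ k ∈ range n, |a n k|) / |a n n|), fun x hx k hk => ?_⟩
    have hS := supNorm_nonneg (triangleMap a x)
    rcases (Nat.lt_succ_iff_lt_or_eq.mp hk) with hk | rfl
    · exact (hC x hx k hk).trans (mul_le_mul_of_nonneg_right (le_max_left _ _) hS)
    · exact (abs_le_mul_supNorm_triangleMap_of_forall_lt hx (ha k) (hC x hx)).trans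
        (mul_le_mul_of_nonneg_right (le_max_right _ _) hS)

theorem isBKSpace_triangleMap_preimage (ha : ∀ n, a n n ≠ 0) {T : Set (ℕ → ℝ)}
    (hT : T ⊆ linfSeq) (hcl : IsUniformLimitClosed T) :
    IsBKSpace {x | triangleMap a x ∈ T} (fun x => supNorm (triangleMap a x)) := by
  choose C hC using exists_abs_le_mul_supNorm_triangleMap ha
  refine ⟨fun x _ => supNorm_nonneg _, ?_, ?_, ?_, ?_, fun n => ⟨C n, fun x hx => hC n x (hT hx)⟩⟩
  · intro x hx h0
    funext n
    simpa [h0] using hC n x (hT hx)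
  · intro x _ c
    simp only [map_smul, supNorm_smul]
  · intro x hx y hy
    simpa only [map_add] using supNorm_add_le (hT hx) (hT hy)
  · intro u hu hc
    obtain ⟨Y, hYT, hY⟩ :=
      exists_tendsto_supNorm_of_cauchy hT hcl hu (by simpa only [map_sub] using hc)
    obtain ⟨x, rfl⟩ := triangleMap_surjective ha Y
    exact ⟨x, hYT, by simpa only [map_sub] using hY⟩

end TriangleMap

lemma hMat_self_ne_zero (m n : ℕ) : hMat m n n ≠ 0 := by
  simp only [hMat, Icc_self, sum_singleton, Nat.sub_self, pow_zero, Nat.choose_zero_right]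
  positivity

theorem hilbert_diff_BK_general (m : ℕ) :
    IsBKSpace (hZero m) (hNorm m) ∧ IsBKSpace (hConv m) (hNorm m) ∧
      IsBKSpace (hBdd m) (hNorm m) :=
  have hdiag := hMat_self_ne_zero m
  ⟨isBKSpace_triangleMap_preimage hdiag c0Seq_subset_linfSeq isUniformLimitClosed_c0Seq,
    isBKSpace_triangleMap_preimage hdiag cSeq_subset_linfSeq isUniformLimitClosed_cSeq,
    isBKSpace_triangleMap_preimage hdiag subset_rfl isUniformLimitClosed_linfSeq⟩

/-- The spaces `h_0(Δ^(m))`, `h_c(Δ^(m))`, `h_∞(Δ^(m))` are BK-spaces for the norm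
`‖x‖ = sup_n |(H^(m) x)_n|`. -/
theorem hilbert_diff_BK (m : ℕ) (hm : 1 ≤ m) :
    IsBKSpace (hZero m) (hNorm m) ∧ IsBKSpace (hConv m) (hNorm m) ∧
      IsBKSpace (hBdd m) (hNorm m) :=
  hilbert_diff_BK_general m
end

section
/- Fix an integer m ≥ 1 and a real sequence a = (a_k). Define the lower-triangular matrix V = (v_{nk}) by v_{nk} = Σ_{j=k}^{n} a_j B_{jk} for 1 ≤ k ≤ n, where B is the inverse triangle of H^(m). Then a belongs to the γ-dual of h_c(Δ^(m)) — i.e. the partial sums Σ_{k=1}^{n} a_k x_k are bounded in n for every x ∈ h_c(Δ^(m)) — if and only if V ∈ (c : ℓ∞), i.e. for every convergent sequence y the sequence ((Vy)_n)_n = (Σ_{k=1}^{n} v_{nk} y_k)_n is bounded. -/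
open Filter Finset Topology

/- The proof transports the question along the bijection `x ↦ H^(m) x` of `h_c(Δ^(m))` onto `c`,
whose inverse is `y ↦ B y`. Exchanging the order of summation over the triangle `j ≤ k ≤ n` gives
`∑_{k ≤ n} a_k (B y)_k = (V y)_n`, so the partial sums of `a x` for `x ∈ h_c(Δ^(m))` are exactly
the sequences `V y` for `y ∈ c`. -/

section LowerTriangular

variable {R : Type*} [Semiring R]

def triMulVec (A : ℕ → ℕ → R) (x : ℕ → R) (n : ℕ) : R :=
  ∑ k ∈ range (n + 1), A n k * x k

def triMul (A C : ℕ → ℕ → R) (n k : ℕ) : R :=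
  ∑ j ∈ Icc k n, A n j * C j k

theorem sum_range_sum_range_succ_comm {M : Type*} [AddCommMonoid M] (f : ℕ → ℕ → M) (n : ℕ) :
    ∑ k ∈ range (n + 1), ∑ j ∈ range (k + 1), f k j =
      ∑ j ∈ range (n + 1), ∑ k ∈ Icc j n, f k j :=
  sum_comm' fun k j => by simp only [mem_range, mem_Icc]; omega

theorem triMulVec_triMulVec (A C : ℕ → ℕ → R) (x : ℕ → R) (n : ℕ) :
    triMulVec A (triMulVec C x) n = triMulVec (triMul A C) x n := by
  simp only [triMulVec, triMul, mul_sum, sum_mul, mul_assoc]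
  exact sum_range_sum_range_succ_comm _ n

theorem triMulVec_triMulVec_of_triMul_eq_delta {A C : ℕ → ℕ → R}
    (h : ∀ n k, triMul A C n k = if n = k then 1 else 0) (x : ℕ → R) :
    triMulVec A (triMulVec C x) = x := by
  funext n
  rw [triMulVec_triMulVec]
  simp [triMulVec, h]

end LowerTriangular

theorem hilbert_diff_gammaDual_hc_general (m : ℕ) (a : ℕ → ℝ)
    (B : ℕ → ℕ → ℝ)
    (hBright : ∀ n k : ℕ, (∑ j ∈ Finset.Icc k n, hMat m n j * B j k) = if n = k then 1 else 0)
    (hBleft : ∀ n k : ℕ, (∑ j ∈ Finset.Icc k n, B n j * hMat m j k) = if n = k then 1 else 0) :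
    (∀ x ∈ hConv m, ∃ M : ℝ, ∀ n : ℕ,
        |∑ k ∈ Finset.range (n + 1), a k * x k| ≤ M) ↔
    (∀ y ∈ cSeq, ∃ M : ℝ, ∀ n : ℕ,
        |∑ k ∈ Finset.range (n + 1),
          (∑ j ∈ Finset.Icc k n, a j * B j k) * y k| ≤ M) := by
  have hHB : ∀ y, hTrans m (triMulVec B y) = y :=
    triMulVec_triMulVec_of_triMul_eq_delta hBright
  have hBH : ∀ x, triMulVec B (hTrans m x) = x :=
    triMulVec_triMulVec_of_triMul_eq_delta hBleft
  have hV : ∀ y n, ∑ k ∈ range (n + 1), a k * triMulVec B y k =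
      ∑ k ∈ range (n + 1), (∑ j ∈ Icc k n, a j * B j k) * y k :=
    triMulVec_triMulVec (fun _ k => a k) B
  constructor
  · rintro H y ⟨L, hL⟩
    obtain ⟨M, hM⟩ := H (triMulVec B y) ⟨L, by rwa [hHB]⟩
    exact ⟨M, fun n => hV y n ▸ hM n⟩
  · intro H x hx
    obtain ⟨M, hM⟩ := H (hTrans m x) hx
    refine ⟨M, fun n => ?_⟩
    rw [← hBH x, hV]
    exact hM n

/-- `a` is in the γ-dual of `hConv m` iff the matrix `V`, `v_{nk} = ∑_{j=k}^n a_j B_{jk}`,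
maps `cSeq` into the bounded sequences. -/
theorem hilbert_diff_gammaDual_hc (m : ℕ) (hm : 1 ≤ m) (a : ℕ → ℝ)
    (B : ℕ → ℕ → ℝ)
    (hBtri : ∀ n k : ℕ, n < k → B n k = 0)
    (hBright : ∀ n k : ℕ, (∑ j ∈ Finset.Icc k n, hMat m n j * B j k) = if n = k then 1 else 0)
    (hBleft : ∀ n k : ℕ, (∑ j ∈ Finset.Icc k n, B n j * hMat m j k) = if n = k then 1 else 0) :
    (∀ x ∈ hConv m, ∃ M : ℝ, ∀ n : ℕ,
        |∑ k ∈ Finset.range (n + 1), a k * x k| ≤ M) ↔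
    (∀ y ∈ cSeq, ∃ M : ℝ, ∀ n : ℕ,
        |∑ k ∈ Finset.range (n + 1),
          (∑ j ∈ Finset.Icc k n, a j * B j k) * y k| ≤ M) :=
  hilbert_diff_gammaDual_hc_general m a B hBright hBleft
end
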